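/- Fix N ≥ 1 and r ∈ ℝ. Define the N×N matrix H̃ by H̃_{ij} = (−1)^N (ψ_{i+j−N}(2r²) − ψ_{i+j−N+1}(2r²)) where ψ_n(x) = e^{−x/2}L_n(x) for n ≥ 0 and ψ_n ≡ 0 for n < 0. Define L_{jk} = ∫_{2r²}^∞ ψ_j(x)ψ_k(x) dx. Then H̃² = L, i.e. for all j,k ∈ {0,…,N−1}, ∑_{n=0}^{N−1} H̃_{jn} H̃_{nk} = ∫_{2r²}^∞ ψ_j(x)ψ_k(x) dx. -/

import Mathlib

open MeasureTheory

/-- The `k`-th (normalized) Laguerre polynomial. -/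
noncomputable def Lag (k : ℕ) (x : ℝ) : ℝ :=
  ∑ l ∈ Finset.range (k + 1), (k.choose l : ℝ) * (-1) ^ l / (Nat.factorial l) * x ^ l

/-- The Laguerre function `ψ_n(x) = e^{-x/2} L_n(x)` for `n ≥ 0`,
extended by `ψ_n ≡ 0` for `n < 0`. -/
noncomputable def psiZ (n : ℤ) (x : ℝ) : ℝ :=
  if 0 ≤ n then Real.exp (-x / 2) * Lag n.toNat x else 0

/-- The Laguerre function with natural index. -/
noncomputable def psiL (n : ℕ) (x : ℝ) : ℝ := Real.exp (-x / 2) * Lag n x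

/-- The matrix `H̃`, with `H̃_{ij} = (-1)^N (ψ_{i+j-N}(2r²) - ψ_{i+j-N+1}(2r²))`. -/
noncomputable def Ht (N : ℕ) (r : ℝ) : Matrix (Fin N) (Fin N) ℝ :=
  fun i j => (-1) ^ N *
    (psiZ ((i : ℤ) + (j : ℤ) - (N : ℤ)) (2 * r ^ 2) -
     psiZ ((i : ℤ) + (j : ℤ) - (N : ℤ) + 1) (2 * r ^ 2))

/-- The matrix `Q`: `-2r` on the diagonal, `-4r` below it, `0` above it. -/
noncomputable def Qm (N : ℕ) (r : ℝ) : Matrix (Fin N) (Fin N) ℝ :=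
  fun i j => if (i : ℕ) = (j : ℕ) then -2 * r
    else if (j : ℕ) < (i : ℕ) then -4 * r else 0

/-- The constant vector `u` with all entries `(-1)^{N-1}`. -/
noncomputable def uVec (N : ℕ) : Fin N → ℝ := fun _ => (-1) ^ (N - 1)

/-- The alternating vector `v` with entries `v_i = 2(-1)^i`. -/
noncomputable def vVec (N : ℕ) : Fin N → ℝ := fun i => 2 * (-1) ^ (i : ℕ)

/-! Write `φ_a = ψ_a - ψ_{a+1}`. The Laguerre identity `(L_n - L_{n+1})' = L_n` gives
`φ_a' = -φ_a / 2 + ψ_a`, hence `(φ_a φ_b)' = ψ_a ψ_b - ψ_{a+1} ψ_{b+1}`. The entry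
`(H̃²)_{jk} = ∑ₙ φ_{j+n-N} φ_{n+k-N}`, viewed as a function of `x = 2r²`, therefore has a
telescoping derivative equal to `-ψ_j ψ_k` (as `ψ_{j-N} = 0`), and it tends to `0` at infinity,
so it is the tail integral of `ψ_j ψ_k`. -/

open Finset Filter Topology Real

lemma Lag_eq_sum_range_add_two (n : ℕ) (x : ℝ) :
    Lag n x = ∑ l ∈ range (n + 2), (n.choose l : ℝ) * (-1) ^ l / l.factorial * x ^ l := by
  rw [sum_range_succ, Nat.choose_succ_self]
  simp [Lag]

lemma Lag_sub_Lag_succ (n : ℕ) (x : ℝ) :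
    Lag n x - Lag (n + 1) x
      = ∑ m ∈ range (n + 1), (n.choose m : ℝ) * (-1) ^ m / (m + 1).factorial * x ^ (m + 1) := by
  rw [Lag_eq_sum_range_add_two, Lag, ← sum_sub_distrib, sum_range_succ']
  simp only [Nat.choose_zero_right, sub_self, add_zero]
  refine sum_congr rfl fun m _ => ?_
  rw [Nat.choose_succ_succ', Nat.factorial_succ]
  push_cast
  field_simp
  ring

lemma hasDerivAt_Lag_sub_Lag_succ (n : ℕ) (x : ℝ) :
    HasDerivAt (fun t => Lag n t - Lag (n + 1) t) (Lag n x) x := by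
  simp_rw [Lag_sub_Lag_succ]
  refine (HasDerivAt.fun_sum (u := range (n + 1)) fun m _ =>
    (hasDerivAt_pow (m + 1) x).const_mul
      ((n.choose m : ℝ) * (-1) ^ m / (m + 1).factorial)).congr_deriv ?_
  unfold Lag
  refine sum_congr rfl fun m _ => ?_
  rw [Nat.factorial_succ]
  push_cast
  field_simp

lemma hasDerivAt_exp_neg_half_mul {g : ℝ → ℝ} {g' x : ℝ} (hg : HasDerivAt g g' x) :
    HasDerivAt (fun t => exp (-t / 2) * g t)
      (-(1 / 2) * (exp (-x / 2) * g x) + exp (-x / 2) * g') x := by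
  have he := ((hasDerivAt_neg x).div_const 2).exp
  refine (he.fun_mul hg).congr_deriv ?_
  ring

noncomputable def phiZ (a : ℤ) (x : ℝ) : ℝ := psiZ a x - psiZ (a + 1) x

lemma psiZ_natCast (n : ℕ) (x : ℝ) : psiZ n x = psiL n x := by
  simp [psiZ, psiL]

lemma psiZ_of_neg {a : ℤ} (h : a < 0) (x : ℝ) : psiZ a x = 0 := by
  simp [psiZ, not_le.mpr h]

lemma hasDerivAt_phiZ (a : ℤ) (x : ℝ) :
    HasDerivAt (phiZ a) (-(1 / 2) * phiZ a x + psiZ a x) x := by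
  rcases a with n | _ | n
  · have h := hasDerivAt_exp_neg_half_mul (hasDerivAt_Lag_sub_Lag_succ n x)
    have hphi : phiZ n = fun t => exp (-t / 2) * (Lag n t - Lag (n + 1) t) := by
      ext t
      simp only [phiZ, psiL, ← Nat.cast_succ, psiZ_natCast]
      ring
    simp only [Int.ofNat_eq_natCast, hphi, psiZ_natCast, psiL]
    convert h using 2
  · have hphi : phiZ (Int.negSucc 0) = fun t => exp (-t / 2) * -1 := by
      ext t
      simp [phiZ, psiZ, Lag]
    have h := hasDerivAt_exp_neg_half_mul (hasDerivAt_const x (-1 : ℝ))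
    rw [hphi, psiZ_of_neg (Int.negSucc_lt_zero 0)]
    convert h using 1
    ring
  · have hphi : phiZ (Int.negSucc (n + 1)) = fun _ => 0 := by
      ext t
      rw [phiZ, psiZ_of_neg (by omega), psiZ_of_neg (by omega), sub_self]
    rw [hphi, psiZ_of_neg (by omega)]
    simpa using hasDerivAt_const x (0 : ℝ)

lemma hasDerivAt_phiZ_mul_phiZ (a b : ℤ) (x : ℝ) :
    HasDerivAt (fun t => phiZ a t * phiZ b t)
      (psiZ a x * psiZ b x - psiZ (a + 1) x * psiZ (b + 1) x) x := by
  refine ((hasDerivAt_phiZ a x).fun_mul (hasDerivAt_phiZ b x)).congr_deriv ?_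
  unfold phiZ
  ring

lemma sum_psiZ_mul_psiZ_sub_succ {N : ℕ} (j k : Fin N) (x : ℝ) :
    ∑ n : Fin N, (psiZ (j + n - N) x * psiZ (n + k - N) x
        - psiZ (j + n - N + 1) x * psiZ (n + k - N + 1) x)
      = -(psiL j x * psiL k x) := by
  set G : ℕ → ℝ := fun m => psiZ (j + m - N) x * psiZ (k + m - N) x
  have hG0 : G 0 = 0 := by
    simp [G, psiZ_of_neg (show (j : ℤ) - N < 0 by omega)]
  have hGN : G N = psiL j x * psiL k x := by
    simp [G, psiZ_natCast]
  calc _ = ∑ n ∈ range N, (G n - G (n + 1)) := by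
        rw [← Fin.sum_univ_eq_sum_range (fun n => G n - G (n + 1))]
        refine sum_congr rfl fun n _ => ?_
        simp only [G]
        push_cast
        ring_nf
    _ = _ := by rw [sum_range_sub', hG0, hGN, zero_sub]

lemma tendsto_exp_neg_mul_mul_Lag {c : ℝ} (hc : 0 < c) (n : ℕ) :
    Tendsto (fun x => exp (-c * x) * Lag n x) atTop (𝓝 0) := by
  have hmon (l : ℕ) : Tendsto (fun x : ℝ => x ^ l * exp (-c * x)) atTop (𝓝 0) := by
    simpa [Real.rpow_natCast] using tendsto_rpow_mul_exp_neg_mul_atTop_nhds_zero l c hc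
  have hsum := tendsto_finsetSum (range (n + 1)) fun l _ =>
    (hmon l).const_mul ((n.choose l : ℝ) * (-1) ^ l / l.factorial)
  simp only [mul_zero, sum_const_zero] at hsum
  refine hsum.congr fun x => ?_
  rw [Lag, mul_sum]
  exact sum_congr rfl fun l _ => by ring

lemma tendsto_psiZ (a : ℤ) : Tendsto (psiZ a) atTop (𝓝 0) := by
  by_cases ha : 0 ≤ a
  · refine (tendsto_exp_neg_mul_mul_Lag (c := 1 / 2) (by norm_num) a.toNat).congr fun x => ?_
    simp only [psiZ, ha, if_true]
    ring_nf
  · rw [show psiZ a = fun _ => 0 from funext (psiZ_of_neg (not_le.mp ha))]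
    exact tendsto_const_nhds

lemma tendsto_phiZ (a : ℤ) : Tendsto (phiZ a) atTop (𝓝 0) := by
  have h := (tendsto_psiZ a).sub (tendsto_psiZ (a + 1))
  rwa [sub_zero] at h

lemma continuous_psiL (n : ℕ) : Continuous (psiL n) := by
  unfold psiL Lag
  fun_prop

-- Each `exp (-x/4) * L_n(x)` is bounded at infinity, so `ψ_n ψ_m = O(exp (-x/2))`.
lemma integrableOn_psiL_mul_psiL (n m : ℕ) (a : ℝ) :
    IntegrableOn (fun x => psiL n x * psiL m x) (Set.Ioi a) := by
  refine integrable_of_isBigO_exp_neg (b := 1 / 2) (by norm_num)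
    ((continuous_psiL n).mul (continuous_psiL m)).continuousOn ?_
  have hbdd := ((tendsto_exp_neg_mul_mul_Lag (c := 1 / 4) (by norm_num) n).mul
    (tendsto_exp_neg_mul_mul_Lag (c := 1 / 4) (by norm_num) m)).isBigO_one ℝ
  refine ((Asymptotics.isBigO_refl (fun x => exp (-(1 / 2) * x)) atTop).mul hbdd).congr
    (fun x => ?_) (fun x => mul_one _)
  have hexp : exp (-x / 2) * exp (-x / 2)
      = exp (-(1 / 2) * x) * (exp (-(1 / 4) * x) * exp (-(1 / 4) * x)) := by
    simp only [← Real.exp_add]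
    ring_nf
  simp only [psiL]
  linear_combination -(Lag n x * Lag m x) * hexp

lemma Ht_mul_Ht (N : ℕ) (r : ℝ) (i n k : Fin N) :
    Ht N r i n * Ht N r n k = phiZ (i + n - N) (2 * r ^ 2) * phiZ (n + k - N) (2 * r ^ 2) := by
  rw [Ht, Ht, mul_mul_mul_comm, ← mul_pow]
  norm_num [phiZ]

theorem stmt9_general (N : ℕ) (r : ℝ) (j k : Fin N) :
    ∑ n : Fin N, Ht N r j n * Ht N r n k
      = ∫ x in Set.Ioi (2 * r ^ 2), psiL (j : ℕ) x * psiL (k : ℕ) x := by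
  set F : ℝ → ℝ := fun t => ∑ n : Fin N, phiZ (j + n - N) t * phiZ (n + k - N) t
  have hF (x : ℝ) : HasDerivAt (fun t => -F t) (psiL j x * psiL k x) x := by
    have h := (HasDerivAt.fun_sum (u := univ) fun (n : Fin N) _ =>
      hasDerivAt_phiZ_mul_phiZ (j + n - N) (n + k - N) x).fun_neg
    rwa [sum_psiZ_mul_psiZ_sub_succ, neg_neg] at h
  have hlim : Tendsto (fun t => -F t) atTop (𝓝 0) := by
    simpa using (tendsto_finsetSum univ fun (n : Fin N) _ =>
      (tendsto_phiZ (j + n - N)).mul (tendsto_phiZ (n + k - N))).neg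
  rw [integral_Ioi_of_hasDerivAt_of_tendsto' (fun x _ => hF x)
    (integrableOn_psiL_mul_psiL j k _) hlim]
  simp [F, Ht_mul_Ht]

theorem stmt9 (N : ℕ) (hN : 1 ≤ N) (r : ℝ) (j k : Fin N) :
    ∑ n : Fin N, Ht N r j n * Ht N r n k
      = ∫ x in Set.Ioi (2 * r ^ 2), psiL (j : ℕ) x * psiL (k : ℕ) x :=
  stmt9_general N r j k
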